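/- arXiv:2501.10205 — 3 statements merged into one kernel-verified Lean document; each statement's English description precedes it below -/
import Mathlib

section
/- Let W be a real inner product space of dimension 2n (n ≥ 1) with an orthogonal complex structure J (a linear isometry J : W → W with J ∘ J = −id), let (e_1, …, e_{2n}) be an orthonormal basis of W, let V be a finite-dimensional real inner product space, and let R : W × W → V be an alternating ℝ-bilinear map. Then 2·|R|² + ∑_{i,j=1}^{2n} ⟨R(e_i,e_j), R(J e_i, J e_j)⟩ + ‖∑_{i=1}^{2n} R(e_i, J e_i)‖² ≤ (4 + 4n)·|R|², where |R|² := (1/2)·∑_{i,j=1}^{2n} ‖R(e_i,e_j)‖². -/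
/-!
Since `J` is an isometry of the finite-dimensional space `W`, `(J eᵢ)` is again an orthonormal
basis, and `∑ᵢⱼ ‖R(uᵢ, uⱼ)‖²` does not depend on the orthonormal basis `u` (it is the trace of
`T⋆T` in each slot). Cauchy–Schwarz then bounds the middle sum by `2|R|²`, and the last term by
`2n · 2|R|²`, since `‖R(eᵢ, Jeᵢ)‖²` is a term of `∑ⱼ ‖R(eᵢ, Jeⱼ)‖² = ∑ⱼ ‖R(eᵢ, eⱼ)‖²`.
-/

open RealInnerProductSpace

theorem norm_sum_sq_le_card_mul_sum_norm_sq {ι E : Type*} [Fintype ι] [SeminormedAddCommGroup E]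
    (x : ι → E) : ‖∑ i, x i‖ ^ 2 ≤ Fintype.card ι * ∑ i, ‖x i‖ ^ 2 :=
  (pow_le_pow_left₀ (norm_nonneg _) (norm_sum_le _ _) 2).trans (sq_sum_le_card_mul_sum_sq ..)

namespace OrthonormalBasis

variable {ι κ W V : Type*} [Fintype ι] [Fintype κ]
  [NormedAddCommGroup W] [InnerProductSpace ℝ W] [FiniteDimensional ℝ W]
  [NormedAddCommGroup V] [InnerProductSpace ℝ V] [FiniteDimensional ℝ V]

theorem sum_norm_sq_apply_eq_trace (e : OrthonormalBasis ι ℝ W) (T : W →ₗ[ℝ] V) :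
    ∑ i, ‖T (e i)‖ ^ 2 = LinearMap.trace ℝ W (LinearMap.adjoint T ∘ₗ T) := by
  rw [LinearMap.trace_eq_sum_inner _ e]
  congr! with i
  rw [LinearMap.comp_apply, LinearMap.adjoint_inner_right, real_inner_self_eq_norm_sq]

theorem sum_norm_sq_apply_eq (e : OrthonormalBasis ι ℝ W) (f : OrthonormalBasis κ ℝ W)
    (T : W →ₗ[ℝ] V) : ∑ i, ‖T (e i)‖ ^ 2 = ∑ k, ‖T (f k)‖ ^ 2 := by
  rw [e.sum_norm_sq_apply_eq_trace, f.sum_norm_sq_apply_eq_trace]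

theorem sum_sum_norm_sq_apply₂_eq (e : OrthonormalBasis ι ℝ W) (f : OrthonormalBasis κ ℝ W)
    (R : W →ₗ[ℝ] W →ₗ[ℝ] V) :
    ∑ i, ∑ j, ‖R (e i) (e j)‖ ^ 2 = ∑ k, ∑ l, ‖R (f k) (f l)‖ ^ 2 := by
  calc ∑ i, ∑ j, ‖R (e i) (e j)‖ ^ 2 = ∑ i, ∑ l, ‖R (e i) (f l)‖ ^ 2 := by
        simp only [e.sum_norm_sq_apply_eq f (R (e _))]
    _ = ∑ l, ∑ i, ‖R.flip (f l) (e i)‖ ^ 2 := Finset.sum_comm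
    _ = ∑ l, ∑ k, ‖R.flip (f l) (f k)‖ ^ 2 := by
        simp only [e.sum_norm_sq_apply_eq f (R.flip (f _))]
    _ = ∑ k, ∑ l, ‖R (f k) (f l)‖ ^ 2 := Finset.sum_comm

variable (e : OrthonormalBasis ι ℝ W) (J : W →ₗᵢ[ℝ] W) (R : W →ₗ[ℝ] W →ₗ[ℝ] V)

noncomputable def mapIsometry : OrthonormalBasis ι ℝ W :=
  e.map (J.toLinearIsometryEquiv rfl)

@[simp]
theorem mapIsometry_apply (i : ι) : e.mapIsometry J i = J (e i) := by
  simp [mapIsometry]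

theorem sum_sum_inner_apply₂_isometry_le :
    ∑ i, ∑ j, ⟪R (e i) (e j), R (J (e i)) (J (e j))⟫ ≤ ∑ i, ∑ j, ‖R (e i) (e j)‖ ^ 2 := by
  have hJ := e.sum_sum_norm_sq_apply₂_eq (e.mapIsometry J) R
  simp only [mapIsometry_apply] at hJ
  have h_inner (u v : V) : ⟪u, v⟫ ≤ (‖u‖ ^ 2 + ‖v‖ ^ 2) / 2 := by
    nlinarith [real_inner_le_norm u v, two_mul_le_add_sq ‖u‖ ‖v‖]
  calc ∑ i, ∑ j, ⟪R (e i) (e j), R (J (e i)) (J (e j))⟫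
      ≤ ∑ i, ∑ j, (‖R (e i) (e j)‖ ^ 2 + ‖R (J (e i)) (J (e j))‖ ^ 2) / 2 := by
        gcongr with i _ j _; exact h_inner _ _
    _ = (∑ i, ∑ j, ‖R (e i) (e j)‖ ^ 2 + ∑ i, ∑ j, ‖R (J (e i)) (J (e j))‖ ^ 2) / 2 := by
        simp only [← Finset.sum_div, ← Finset.sum_add_distrib]
    _ = ∑ i, ∑ j, ‖R (e i) (e j)‖ ^ 2 := by rw [← hJ]; ring

theorem norm_sum_apply₂_isometry_sq_le :
    ‖∑ i, R (e i) (J (e i))‖ ^ 2 ≤ Fintype.card ι * ∑ i, ∑ j, ‖R (e i) (e j)‖ ^ 2 := by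
  refine (norm_sum_sq_le_card_mul_sum_norm_sq _).trans ?_
  gcongr with i _
  calc ‖R (e i) (J (e i))‖ ^ 2 ≤ ∑ j, ‖R (e i) (e.mapIsometry J j)‖ ^ 2 := by
        simpa using Finset.single_le_sum (f := fun j ↦ ‖R (e i) (e.mapIsometry J j)‖ ^ 2)
          (fun _ _ ↦ sq_nonneg _) (Finset.mem_univ i)
    _ = ∑ j, ‖R (e i) (e j)‖ ^ 2 := (e.sum_norm_sq_apply_eq _ _).symm

end OrthonormalBasis

theorem stability_pointwise_estimate_i_general
    {W V : Type*} [NormedAddCommGroup W] [InnerProductSpace ℝ W]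
    [NormedAddCommGroup V] [InnerProductSpace ℝ V] [FiniteDimensional ℝ V]
    {n : ℕ}
    (e : OrthonormalBasis (Fin (2 * n)) ℝ W)
    (J : W →ₗᵢ[ℝ] W)
    (R : W →ₗ[ℝ] W →ₗ[ℝ] V) :
    2 * ((1 / 2) * ∑ i, ∑ j, ‖R (e i) (e j)‖ ^ 2)
      + (∑ i, ∑ j, ⟪R (e i) (e j), R (J (e i)) (J (e j))⟫)
      + ‖∑ i, R (e i) (J (e i))‖ ^ 2
    ≤ (4 + 4 * (n : ℝ)) * ((1 / 2) * ∑ i, ∑ j, ‖R (e i) (e j)‖ ^ 2) := by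
  have : FiniteDimensional ℝ W := e.toBasis.finiteDimensional_of_finite
  have h_inner := e.sum_sum_inner_apply₂_isometry_le J R
  have h_diag := e.norm_sum_apply₂_isometry_sq_le J R
  rw [Fintype.card_fin, Nat.cast_mul, Nat.cast_two] at h_diag
  linarith

/-- Lemma 3.5(i) of the paper, at a point: for an alternating bilinear map `R`
on a `2n`-dimensional real inner product space `W` with orthogonal complex
structure `J`, one has
`2|R|² + ∑ᵢⱼ ⟨R(eᵢ,eⱼ), R(Jeᵢ,Jeⱼ)⟩ + ‖∑ᵢ R(eᵢ,Jeᵢ)‖² ≤ (4+4n)|R|²`,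
where `|R|² = (1/2)∑ᵢⱼ ‖R(eᵢ,eⱼ)‖²`. -/
theorem stability_pointwise_estimate_i
    {W V : Type*} [NormedAddCommGroup W] [InnerProductSpace ℝ W]
    [NormedAddCommGroup V] [InnerProductSpace ℝ V] [FiniteDimensional ℝ V]
    {n : ℕ} (hn : 1 ≤ n)
    (e : OrthonormalBasis (Fin (2 * n)) ℝ W)
    (J : W →ₗᵢ[ℝ] W) (hJ : ∀ x : W, J (J x) = -x)
    (R : W →ₗ[ℝ] W →ₗ[ℝ] V) (hR : ∀ x : W, R x x = 0) :
    2 * ((1 / 2) * ∑ i, ∑ j, ‖R (e i) (e j)‖ ^ 2)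
      + (∑ i, ∑ j, ⟪R (e i) (e j), R (J (e i)) (J (e j))⟫)
      + ‖∑ i, R (e i) (J (e i))‖ ^ 2
    ≤ (4 + 4 * (n : ℝ)) * ((1 / 2) * ∑ i, ∑ j, ‖R (e i) (e j)‖ ^ 2) :=
  stability_pointwise_estimate_i_general e J R
end

section
/- Let W be a real inner product space of dimension 2n (n ≥ 1) with an orthogonal complex structure J (a linear isometry J : W → W with J ∘ J = −id), let (e_1, …, e_{2n}) be an orthonormal basis of W, let V be a finite-dimensional real inner product space, and let R : W × W → V be an alternating ℝ-bilinear map. For X, Y ∈ W write ⟨i_X R, i_Y R⟩ := ∑_{k=1}^{2n} ⟨R(X, e_k), R(Y, e_k)⟩, and set |R|² := (1/2)·∑_{i,j=1}^{2n} ‖R(e_i,e_j)‖². Then 4·|R|⁴ + ∑_{i,j=1}^{2n} ( ⟨i_{e_i}R, i_{e_j}R⟩² + ⟨i_{e_i}R, i_{e_j}R⟩·⟨i_{J e_i}R, i_{J e_j}R⟩ ) ≥ (4 + 4/n)·|R|⁴. -/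
open RealInnerProductSpace

/-! The contraction pairing is the quadratic form of the positive operator
`S = ∑ₖ R(·, eₖ)* R(·, eₖ)`. Let `A` and `B` be the matrices of `S` in the orthonormal bases
`(eᵢ)` and `(J eᵢ)`: they have the same trace `2|R|²` and the same Frobenius norm, so
`∑ (A² + AB) = ½ ∑ (A + B)² ≥ ½ tr(A + B)² / 2n = 4|R|⁴ / n` by Cauchy–Schwarz on the diagonal. -/

namespace Matrix

variable {ι : Type*} [Fintype ι]

theorem sq_trace_le_card_mul_sum_sq (M : Matrix ι ι ℝ) :
    M.trace ^ 2 ≤ Fintype.card ι * ∑ i, ∑ j, M i j ^ 2 := by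
  have hdiag : ∑ i, M i i ^ 2 ≤ ∑ i, ∑ j, M i j ^ 2 :=
    Finset.sum_le_sum fun i _ =>
      Finset.single_le_sum (f := fun j => M i j ^ 2) (fun j _ => sq_nonneg _) (Finset.mem_univ i)
  calc M.trace ^ 2 ≤ Fintype.card ι * ∑ i, M i i ^ 2 := sq_sum_le_card_mul_sum_sq
    _ ≤ Fintype.card ι * ∑ i, ∑ j, M i j ^ 2 := by gcongr

theorem two_mul_sq_trace_le_card_mul_sum_sq_add_mul (A B : Matrix ι ι ℝ)
    (htr : B.trace = A.trace) (hfrob : ∑ i, ∑ j, B i j ^ 2 = ∑ i, ∑ j, A i j ^ 2) :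
    2 * A.trace ^ 2 ≤ Fintype.card ι * ∑ i, ∑ j, (A i j ^ 2 + A i j * B i j) := by
  have hhalf : ∑ i, ∑ j, (A i j + B i j) ^ 2 = 2 * ∑ i, ∑ j, (A i j ^ 2 + A i j * B i j) := by
    simp only [add_sq, Finset.sum_add_distrib, mul_assoc, ← Finset.mul_sum]
    rw [hfrob]
    ring
  have hcs := (A + B).sq_trace_le_card_mul_sum_sq
  rw [trace_add, htr] at hcs
  simp only [add_apply, hhalf] at hcs
  linarith

end Matrix

namespace LinearMap

variable {W V ι κ : Type*} [NormedAddCommGroup W] [InnerProductSpace ℝ W]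
  [NormedAddCommGroup V] [InnerProductSpace ℝ V] [Fintype ι]

theorem sum_inner_apply_self_eq_trace (T : W →ₗ[ℝ] W) (b : OrthonormalBasis ι ℝ W) :
    ∑ i, ⟪T (b i), b i⟫ = T.trace ℝ W := by
  simp only [trace_eq_sum_inner T b, real_inner_comm]

theorem sum_sq_inner_apply_eq_trace_adjoint_comp_self [FiniteDimensional ℝ W]
    (T : W →ₗ[ℝ] W) (b : OrthonormalBasis ι ℝ W) :
    ∑ i, ∑ j, ⟪T (b i), b j⟫ ^ 2 = (adjoint T ∘ₗ T).trace ℝ W := by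
  rw [trace_eq_sum_inner _ b]
  refine Finset.sum_congr rfl fun i _ => ?_
  rw [comp_apply, adjoint_inner_right, real_inner_self_eq_norm_sq, b.sum_sq_inner_left]

theorem inner_sum_adjoint_comp_self_apply [Fintype κ] [FiniteDimensional ℝ W]
    [FiniteDimensional ℝ V] (G : κ → W →ₗ[ℝ] V) (x y : W) :
    ⟪(∑ k, adjoint (G k) ∘ₗ G k) x, y⟫ = ∑ k, ⟪G k x, G k y⟫ := by
  simp only [sum_apply, sum_inner, comp_apply, adjoint_inner_left]

end LinearMap

open LinearMap in
theorem stability_pointwise_estimate_ii_general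
    {W V : Type*} [NormedAddCommGroup W] [InnerProductSpace ℝ W]
    [NormedAddCommGroup V] [InnerProductSpace ℝ V] [FiniteDimensional ℝ V]
    {n : ℕ} (hn : 1 ≤ n)
    (e : OrthonormalBasis (Fin (2 * n)) ℝ W)
    (J : W →ₗᵢ[ℝ] W)
    (R : W →ₗ[ℝ] W →ₗ[ℝ] V)
    (ip : W → W → ℝ)
    (hip : ∀ X Y : W, ip X Y = ∑ k, ⟪R X (e k), R Y (e k)⟫)
    (nR2 : ℝ) (hnR2 : nR2 = (1 / 2) * ∑ i, ∑ j, ‖R (e i) (e j)‖ ^ 2) :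
    4 * nR2 ^ 2
      + ∑ i, ∑ j, ((ip (e i) (e j)) ^ 2
          + ip (e i) (e j) * ip (J (e i)) (J (e j)))
    ≥ (4 + 4 / (n : ℝ)) * nR2 ^ 2 := by
  have : FiniteDimensional ℝ W := .of_basis e.toBasis
  let f := e.map (J.toLinearIsometryEquiv rfl)
  let S : W →ₗ[ℝ] W := ∑ k, adjoint (R.flip (e k)) ∘ₗ R.flip (e k)
  have hS (X Y : W) : ip X Y = ⟪S X, Y⟫ := by
    rw [hip, inner_sum_adjoint_comp_self_apply]
    rfl
  let A := Matrix.of fun i j => ⟪S (e i), e j⟫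
  let B := Matrix.of fun i j => ⟪S (f i), f j⟫
  have htrA : A.trace = 2 * nR2 := by
    simp only [Matrix.trace, Matrix.diag, A, Matrix.of_apply, ← hS, hip, hnR2,
      real_inner_self_eq_norm_sq]
    ring
  have key := A.two_mul_sq_trace_le_card_mul_sum_sq_add_mul B
    (by simp only [Matrix.trace, Matrix.diag, A, B, Matrix.of_apply, sum_inner_apply_self_eq_trace])
    (by simp only [A, B, Matrix.of_apply, sum_sq_inner_apply_eq_trace_adjoint_comp_self])
  rw [htrA] at key
  simp only [A, B, Matrix.of_apply, ← hS, f, OrthonormalBasis.map_apply,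
    LinearIsometry.toLinearIsometryEquiv_apply, Fintype.card_fin] at key
  have hnpos : (0 : ℝ) < n := by exact_mod_cast hn
  rw [ge_iff_le, add_mul, add_le_add_iff_left, div_mul_eq_mul_div, div_le_iff₀ hnpos]
  push_cast at key
  linarith

/-- Lemma 3.5(ii) (sharp form): with the contraction pairing
`⟨i_X R, i_Y R⟩ = ∑ₖ ⟨R(X,eₖ), R(Y,eₖ)⟩` and `|R|² = (1/2)∑ᵢⱼ ‖R(eᵢ,eⱼ)‖²`,
one has `4|R|⁴ + ∑ᵢⱼ (⟨i_{eᵢ}R, i_{eⱼ}R⟩² + ⟨i_{eᵢ}R, i_{eⱼ}R⟩⟨i_{Jeᵢ}R, i_{Jeⱼ}R⟩)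
≥ (4 + 4/n)|R|⁴`. -/
theorem stability_pointwise_estimate_ii
    {W V : Type*} [NormedAddCommGroup W] [InnerProductSpace ℝ W]
    [NormedAddCommGroup V] [InnerProductSpace ℝ V] [FiniteDimensional ℝ V]
    {n : ℕ} (hn : 1 ≤ n)
    (e : OrthonormalBasis (Fin (2 * n)) ℝ W)
    (J : W →ₗᵢ[ℝ] W) (hJ : ∀ x : W, J (J x) = -x)
    (R : W →ₗ[ℝ] W →ₗ[ℝ] V) (hR : ∀ x : W, R x x = 0)
    (ip : W → W → ℝ)
    (hip : ∀ X Y : W, ip X Y = ∑ k, ⟪R X (e k), R Y (e k)⟫)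
    (nR2 : ℝ) (hnR2 : nR2 = (1 / 2) * ∑ i, ∑ j, ‖R (e i) (e j)‖ ^ 2) :
    4 * nR2 ^ 2
      + ∑ i, ∑ j, ((ip (e i) (e j)) ^ 2
          + ip (e i) (e j) * ip (J (e i)) (J (e j)))
    ≥ (4 + 4 / (n : ℝ)) * nR2 ^ 2 :=
  stability_pointwise_estimate_ii_general hn e J R ip hip nR2 hnR2
end

section
/- Let n be a positive integer and let a_1, …, a_n be real numbers. Then ∑_{t=1}^{n} (1/(t(t+1)))·( ∑_{γ=t+1}^{n} a_γ )² = ∑_{t=1}^{n} (1 − 1/t)·a_t² + 2·∑_{t=1}^{n} (1 − 1/t)·a_t·( ∑_{γ=t+1}^{n} a_γ ). -/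
/-!
Write `w t = 1 - 1/t`, so that the weight `1/(t(t+1))` is the increment `w (t+1) - w t`, and let
`T t = ∑_{γ=t}^n a_γ`, so that `T t = a_t + T (t+1)`. Then each summand on the left equals
`w t a_t² + 2 w t a_t T(t+1)` plus the increment of `w t T(t)²`, which telescopes to
`w (n+1) T(n+1)² - w 1 T(1)² = 0` because `T (n+1)` is an empty sum and `w 1 = 0`.
-/

namespace Finset

theorem sum_Icc_eq_add_sum_Icc_succ {M : Type*} [AddCommMonoid M] (f : ℕ → M) {m n : ℕ}
    (hmn : m ≤ n) : ∑ i ∈ Icc m n, f i = f m + ∑ i ∈ Icc (m + 1) n, f i := by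
  rw [Icc_eq_cons_Ioc hmn, sum_cons, Icc_add_one_left_eq_Ioc]

theorem sum_Icc_sub_mul_sq_sum_Icc_succ {R : Type*} [CommRing R] (w a : ℕ → R) (m n : ℕ) :
    ∑ t ∈ Icc m n, (w (t + 1) - w t) * (∑ γ ∈ Icc (t + 1) n, a γ) ^ 2
      = ∑ t ∈ Icc m n, w t * a t ^ 2
        + 2 * ∑ t ∈ Icc m n, w t * a t * ∑ γ ∈ Icc (t + 1) n, a γ
        - w m * (∑ γ ∈ Icc m n, a γ) ^ 2 := by
  have hsummand : ∀ t ∈ Icc m n, (w (t + 1) - w t) * (∑ γ ∈ Icc (t + 1) n, a γ) ^ 2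
      = w t * a t ^ 2 + 2 * (w t * a t * ∑ γ ∈ Icc (t + 1) n, a γ)
        + (w (t + 1) * (∑ γ ∈ Icc (t + 1) n, a γ) ^ 2 - w t * (∑ γ ∈ Icc t n, a γ) ^ 2) := by
    intro t ht
    rw [sum_Icc_eq_add_sum_Icc_succ a (mem_Icc.mp ht).2]
    ring
  have htelescope : ∑ t ∈ Icc m n,
      (w (t + 1) * (∑ γ ∈ Icc (t + 1) n, a γ) ^ 2 - w t * (∑ γ ∈ Icc t n, a γ) ^ 2)
        = - (w m * (∑ γ ∈ Icc m n, a γ) ^ 2) := by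
    rcases le_or_gt m (n + 1) with hm | hm
    · rw [← Ico_add_one_right_eq_Icc,
        sum_Ico_sub (f := fun t ↦ w t * (∑ γ ∈ Icc t n, a γ) ^ 2) hm]
      simp [Ico_add_one_right_eq_Icc]
    · simp [Icc_eq_empty_of_lt (show n < m by omega)]
  rw [sum_congr rfl hsummand, sum_add_distrib, sum_add_distrib, htelescope, mul_sum]
  ring

end Finset

open Finset

theorem summation_reordering_identity_general (n : ℕ) (a : ℕ → ℝ) :
    ∑ t ∈ Finset.Icc 1 n,
        (1 / ((t : ℝ) * (t + 1)))
          * (∑ γ ∈ Finset.Icc (t + 1) n, a γ) ^ 2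
      = (∑ t ∈ Finset.Icc 1 n, (1 - 1 / (t : ℝ)) * (a t) ^ 2)
        + 2 * ∑ t ∈ Finset.Icc 1 n,
            (1 - 1 / (t : ℝ)) * a t * ∑ γ ∈ Finset.Icc (t + 1) n, a γ := by
  set w : ℕ → ℝ := fun t ↦ 1 - 1 / (t : ℝ)
  have hweight : ∀ t ∈ Icc 1 n, 1 / ((t : ℝ) * (t + 1)) = w (t + 1) - w t := by
    intro t ht
    have ht0 : (t : ℝ) ≠ 0 := by have := (mem_Icc.mp ht).1; positivity
    simp only [w, Nat.cast_add, Nat.cast_one]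
    field_simp
    ring
  rw [sum_congr rfl fun t ht ↦ by rw [hweight t ht], sum_Icc_sub_mul_sq_sum_Icc_succ]
  simp [w]

/-- The summation-reordering identity used in the proof of Lemma 3.4(iii):
`∑ₜ (1/(t(t+1)))·(∑_{γ=t+1}^n a_γ)²
  = ∑ₜ (1 − 1/t)·aₜ² + 2·∑ₜ (1 − 1/t)·aₜ·(∑_{γ=t+1}^n a_γ)`. -/
theorem summation_reordering_identity (n : ℕ) (hn : 0 < n) (a : ℕ → ℝ) :
    ∑ t ∈ Finset.Icc 1 n,
        (1 / ((t : ℝ) * (t + 1)))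
          * (∑ γ ∈ Finset.Icc (t + 1) n, a γ) ^ 2
      = (∑ t ∈ Finset.Icc 1 n, (1 - 1 / (t : ℝ)) * (a t) ^ 2)
        + 2 * ∑ t ∈ Finset.Icc 1 n,
            (1 - 1 / (t : ℝ)) * a t * ∑ γ ∈ Finset.Icc (t + 1) n, a γ :=
  summation_reordering_identity_general n a
end
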